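/- Let n ≥ 1 and p ≥ 1. There exists a constant C = C(n,p) > 0 such that for every smooth function u on an open subset of ℝ^{1+n}: (a) at every point with t > 0 and |x| ≤ t, Σ_{i=1}^{n} Σ_{|I| = p} |H^I ∂̄_i u| ≤ Σ_{i=1}^{n} Σ_{|I| = p} |∂̄_i H^I u| + C Σ_{|J| < p} Σ_{j=1}^{n} |∂̄_j H^J u|, where ∂̄_i u = ∂_i u + (x^i/t)∂_t u; (b) at every point with t > |x|, setting T = √(t²−|x|²), for every sequence I with |I| = p and every α ∈ {0,…,n}: |H^I ((T/t) ∂_α u)| ≤ |(T/t) ∂_α H^I u| + C Σ_{|J| < p} Σ_{β=0}^{n} |(T/t) ∂_β H^J u|. All sums over J run over finite sequences of indices in {1,…,n} of the indicated lengths. -/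

import Mathlib

open MeasureTheory

noncomputable section

variable {n : ℕ}

/-- The partial derivative `∂_α` on `ℝ^{1+n}`; index `0` is the time variable `t`. -/
def pd (α : Fin (n + 1)) (u : (Fin (n + 1) → ℝ) → ℝ) : (Fin (n + 1) → ℝ) → ℝ :=
  fun p => fderiv ℝ u p (Pi.single α 1)

/-- The Euclidean length `r = |x|` of the spatial part of a point of `ℝ^{1+n}`. -/
def rad (p : Fin (n + 1) → ℝ) : ℝ := Real.sqrt (∑ i : Fin n, p i.succ ^ 2)

/-- The Lorentz boost `H_j = t ∂_j + x^j ∂_t`. -/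
def Lb (j : Fin n) (u : (Fin (n + 1) → ℝ) → ℝ) : (Fin (n + 1) → ℝ) → ℝ :=
  fun p => p 0 * pd j.succ u p + p j.succ * pd 0 u p

/-- The iterated boost `H^I = H_{i₁} ∘ ⋯ ∘ H_{i_m}` for a finite sequence `I`. -/
def HI : List (Fin n) → ((Fin (n + 1) → ℝ) → ℝ) → ((Fin (n + 1) → ℝ) → ℝ)
  | [], u => u
  | j :: I, u => Lb j (HI I u)

/-- The point `(√(T²+|x|²), x)` of the hyperboloid `H_T` over `x ∈ ℝⁿ`. -/
def hyp (T : ℝ) (x : Fin n → ℝ) : Fin (n + 1) → ℝ :=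
  Fin.cons (Real.sqrt (T ^ 2 + ∑ i, x i ^ 2)) x
/-- The hyperboloid-tangential derivative `∂̄_i u = ∂_i u + (x^i/t)∂_t u`, as an
operator on functions. -/
def db (i : Fin n) (u : (Fin (n + 1) → ℝ) → ℝ) : (Fin (n + 1) → ℝ) → ℝ :=
  fun p => pd i.succ u p + (p i.succ / p 0) * pd 0 u p

/-- The operator `(T/t)∂_α` with `T = √(t² - |x|²)`, as an operator on functions. -/
def Td (α : Fin (n + 1)) (u : (Fin (n + 1) → ℝ) → ℝ) : (Fin (n + 1) → ℝ) → ℝ :=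
  fun p => (Real.sqrt ((p 0) ^ 2 - rad p ^ 2) / p 0) * pd α u p

/-!
Each boost commutes with `∂̄_i` and with `(T/t)∂_α` up to first-order terms whose coefficients
are polynomials in the ratios `x^i/t`:
`[H_j, ∂̄_i] = -(x^i/t) ∂̄_j` and
`[H_j, (T/t)∂_α] = -(x^j/t)(T/t)∂_α - (T/t)(δ_{α0} ∂_j + δ_{αj} ∂_t)`,
because `[H_j, ∂_α]` has constant coefficients, `H_j (x^i/t) = δ_{ij} - x^i x^j/t²` and `T` is
boost invariant. The algebra of polynomials in the `x^i/t` is stable under boosts and bounded on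
the cone `|x| ≤ t`, so by induction on `|I|` the commutator `H^I D - D H^I` is a combination, with
such coefficients, of operators `D' H^J` with `|J| < |I|`; bounding the coefficients gives the
estimates.
-/

open scoped ContDiff Topology

abbrev Spacetime (n : ℕ) := Fin (n + 1) → ℝ

section BoostCalculus

variable {u v : Spacetime n → ℝ} {p : Spacetime n} {U : Set (Spacetime n)}

lemma contDiffOn_pd (hU : IsOpen U) (hu : ContDiffOn ℝ ∞ u U) (α : Fin (n + 1)) :
    ContDiffOn ℝ ∞ (pd α u) U :=
  (hu.fderiv_of_isOpen hU le_rfl).clm_apply contDiffOn_const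

lemma contDiffOn_Lb (hU : IsOpen U) (hu : ContDiffOn ℝ ∞ u U) (j : Fin n) :
    ContDiffOn ℝ ∞ (Lb j u) U :=
  ((contDiffOn_apply ℝ ℝ 0 U).mul (contDiffOn_pd hU hu j.succ)).add
    ((contDiffOn_apply ℝ ℝ j.succ U).mul (contDiffOn_pd hU hu 0))

lemma contDiffOn_HI (hU : IsOpen U) (hu : ContDiffOn ℝ ∞ u U) (I : List (Fin n)) :
    ContDiffOn ℝ ∞ (HI I u) U := by
  induction I with
  | nil => exact hu
  | cons j I ih => exact contDiffOn_Lb hU ih j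

lemma HI_append (K J : List (Fin n)) (u : Spacetime n → ℝ) :
    HI (K ++ J) u = HI K (HI J u) := by
  induction K with
  | nil => rfl
  | cons j K ih => simp only [List.cons_append, HI, ih]

/-- The vector field `t ∂_j + x^j ∂_t` of the boost `H_j`. -/
def boostField (j : Fin n) : Spacetime n →L[ℝ] Spacetime n :=
  (ContinuousLinearMap.proj 0 : Spacetime n →L[ℝ] ℝ).smulRight (Pi.single j.succ 1)
    + (ContinuousLinearMap.proj j.succ : Spacetime n →L[ℝ] ℝ).smulRight (Pi.single 0 1)

lemma fderiv_boostField (j : Fin n) (u : Spacetime n → ℝ) (p q : Spacetime n) :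
    fderiv ℝ u p (boostField j q) = q 0 * pd j.succ u p + q j.succ * pd 0 u p := by
  simp [boostField, pd]

lemma Lb_eq_fderiv (j : Fin n) (u : Spacetime n → ℝ) (p : Spacetime n) :
    Lb j u p = fderiv ℝ u p (boostField j p) :=
  (fderiv_boostField j u p p).symm

lemma Lb_congr (h : u =ᶠ[𝓝 p] v) (j : Fin n) : Lb j u p = Lb j v p := by
  simp only [Lb_eq_fderiv, h.fderiv_eq]

lemma Lb_const (c : ℝ) (j : Fin n) (p : Spacetime n) : Lb j (fun _ => c) p = 0 := by
  simp [Lb_eq_fderiv]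

lemma Lb_add (hu : DifferentiableAt ℝ u p) (hv : DifferentiableAt ℝ v p) (j : Fin n) :
    Lb j (fun q => u q + v q) p = Lb j u p + Lb j v p := by
  simp [Lb_eq_fderiv, fderiv_fun_add hu hv]

lemma Lb_mul (hu : DifferentiableAt ℝ u p) (hv : DifferentiableAt ℝ v p) (j : Fin n) :
    Lb j (fun q => u q * v q) p = Lb j u p * v p + u p * Lb j v p := by
  simp [Lb_eq_fderiv, fderiv_fun_mul hu hv]
  ring

lemma Lb_comp {g : ℝ → ℝ} {g' : ℝ} (hg : HasDerivAt g g' (u p)) (hu : DifferentiableAt ℝ u p)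
    (j : Fin n) : Lb j (fun q => g (u q)) p = g' * Lb j u p := by
  rw [Lb_eq_fderiv, Lb_eq_fderiv]
  change fderiv ℝ (g ∘ u) p _ = _
  rw [(hg.comp_hasFDerivAt p hu.hasFDerivAt).fderiv]
  simp

lemma Lb_coord (j : Fin n) (β : Fin (n + 1)) (p : Spacetime n) :
    Lb j (fun q => q β) p = boostField j p β := by
  simp [Lb_eq_fderiv, fderiv_apply]

lemma Lb_coord_zero (j : Fin n) (p : Spacetime n) : Lb j (fun q => q 0) p = p j.succ := by
  simp [Lb_coord, boostField]

lemma Lb_coord_succ (i j : Fin n) (p : Spacetime n) :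
    Lb j (fun q => q i.succ) p = if i = j then p 0 else 0 := by
  by_cases h : i = j <;> simp [Lb_coord, boostField, h]

lemma Lb_pd (hU : IsOpen U) (hu : ContDiffOn ℝ ∞ u U) (hp : p ∈ U) (j : Fin n)
    (α : Fin (n + 1)) :
    Lb j (pd α u) p = pd α (Lb j u) p - fderiv ℝ u p (boostField j (Pi.single α 1)) := by
  have hu' : ContDiffAt ℝ ∞ u p := hu.contDiffAt (hU.mem_nhds hp)
  have hsymm : IsSymmSndFDerivAt ℝ u p :=
    hu'.isSymmSndFDerivAt (by simp; exact WithTop.coe_le_coe.mpr le_top)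
  have hdu : DifferentiableAt ℝ (fderiv ℝ u) p :=
    (hu'.fderiv_right (m := ∞) le_rfl).differentiableAt (by simp)
  have hLb : Lb j u = fun q => fderiv ℝ u q (boostField j q) := funext (Lb_eq_fderiv j u)
  rw [Lb_eq_fderiv]
  unfold pd
  rw [hLb, fderiv_clm_apply hdu (boostField j).differentiableAt,
    fderiv_clm_apply hdu (differentiableAt_const _), (boostField j).fderiv]
  simp [hsymm.eq (Pi.single α 1)]

end BoostCalculus

section RatioAlgebra

variable {p : Spacetime n}

def ratio (i : Fin n) (p : Spacetime n) : ℝ := p i.succ / p 0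

lemma isOpen_time_ne_zero : IsOpen {p : Spacetime n | p 0 ≠ 0} :=
  isOpen_ne_fun (continuous_apply 0) continuous_const

lemma contDiffOn_ratio (i : Fin n) : ContDiffOn ℝ ∞ (ratio i) {p : Spacetime n | p 0 ≠ 0} :=
  (contDiffOn_apply ℝ ℝ i.succ _).div (contDiffOn_apply ℝ ℝ 0 _) fun _ hp => hp

lemma Lb_inv_coord_zero (hp : p 0 ≠ 0) (j : Fin n) :
    Lb j (fun q => (q 0)⁻¹) p = -(p 0 ^ 2)⁻¹ * p j.succ := by
  rw [Lb_comp (hasDerivAt_inv hp) (differentiableAt_apply 0 p), Lb_coord_zero]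

lemma Lb_ratio (hp : p 0 ≠ 0) (i j : Fin n) :
    Lb j (ratio i) p = (if i = j then 1 else 0) - ratio i p * ratio j p := by
  have hinv : DifferentiableAt ℝ (fun q : Spacetime n => (q 0)⁻¹) p :=
    (differentiableAt_apply 0 p).inv hp
  have h := Lb_mul (differentiableAt_apply i.succ p) hinv j
  rw [Lb_coord_succ, Lb_inv_coord_zero hp] at h
  rw [show ratio i = fun q => q i.succ * (q 0)⁻¹ from funext fun q => div_eq_mul_inv _ _, h]
  simp only [ratio]
  split_ifs <;> field_simp <;> ring

def ratioAlgebra (n : ℕ) : Subalgebra ℝ (Spacetime n → ℝ) :=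
  Algebra.adjoin ℝ (Set.range ratio)

lemma ratio_mem_ratioAlgebra (i : Fin n) : ratio i ∈ ratioAlgebra n :=
  Algebra.subset_adjoin ⟨i, rfl⟩

lemma contDiffOn_of_mem_ratioAlgebra {a : Spacetime n → ℝ} (ha : a ∈ ratioAlgebra n) :
    ContDiffOn ℝ ∞ a {p : Spacetime n | p 0 ≠ 0} := by
  induction ha using Algebra.adjoin_induction with
  | mem _ h => obtain ⟨i, rfl⟩ := h; exact contDiffOn_ratio i
  | algebraMap r => exact contDiffOn_const
  | add _ _ _ _ ha hb => exact ha.add hb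
  | mul _ _ _ _ ha hb => exact ha.mul hb

lemma differentiableAt_of_mem_ratioAlgebra {a : Spacetime n → ℝ} (ha : a ∈ ratioAlgebra n)
    (hp : p 0 ≠ 0) : DifferentiableAt ℝ a p :=
  ((contDiffOn_of_mem_ratioAlgebra ha).differentiableOn (by simp)).differentiableAt
    (isOpen_time_ne_zero.mem_nhds hp)

lemma exists_Lb_eqOn_of_mem_ratioAlgebra {a : Spacetime n → ℝ} (ha : a ∈ ratioAlgebra n)
    (j : Fin n) : ∃ b ∈ ratioAlgebra n, ∀ p : Spacetime n, p 0 ≠ 0 → Lb j a p = b p := by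
  induction ha using Algebra.adjoin_induction with
  | mem _ h =>
    obtain ⟨i, rfl⟩ := h
    refine ⟨algebraMap ℝ _ (if i = j then 1 else 0) - ratio i * ratio j, ?_, fun p hp => ?_⟩
    · exact sub_mem (Subalgebra.algebraMap_mem _ _)
        (mul_mem (ratio_mem_ratioAlgebra i) (ratio_mem_ratioAlgebra j))
    · by_cases h : i = j <;> simp [Lb_ratio hp, h]
  | algebraMap r => exact ⟨0, zero_mem _, fun p _ => Lb_const r j p⟩
  | add a b ha hb iha ihb =>
    obtain ⟨a', ha', hLa⟩ := iha
    obtain ⟨b', hb', hLb⟩ := ihb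
    refine ⟨a' + b', add_mem ha' hb', fun p hp => ?_⟩
    rw [Pi.add_apply, ← hLa p hp, ← hLb p hp]
    exact Lb_add (differentiableAt_of_mem_ratioAlgebra ha hp)
      (differentiableAt_of_mem_ratioAlgebra hb hp) j
  | mul a b ha hb iha ihb =>
    obtain ⟨a', ha', hLa⟩ := iha
    obtain ⟨b', hb', hLb⟩ := ihb
    refine ⟨a' * b + a * b', add_mem (mul_mem ha' hb) (mul_mem ha hb'), fun p hp => ?_⟩
    simp only [Pi.add_apply, Pi.mul_apply, ← hLa p hp, ← hLb p hp]
    exact Lb_mul (differentiableAt_of_mem_ratioAlgebra ha hp)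
      (differentiableAt_of_mem_ratioAlgebra hb hp) j

lemma abs_coord_succ_le_rad (p : Spacetime n) (i : Fin n) : |p i.succ| ≤ rad p := by
  rw [rad, ← Real.sqrt_sq_eq_abs]
  exact Real.sqrt_le_sqrt (Finset.single_le_sum (fun k _ => sq_nonneg (p k.succ))
    (Finset.mem_univ i))

lemma exists_bound_of_mem_ratioAlgebra {a : Spacetime n → ℝ} (ha : a ∈ ratioAlgebra n) :
    ∃ B, ∀ p : Spacetime n, 0 < p 0 → rad p ≤ p 0 → |a p| ≤ B := by
  induction ha using Algebra.adjoin_induction with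
  | mem _ h =>
    obtain ⟨i, rfl⟩ := h
    refine ⟨1, fun p hp hr => ?_⟩
    rw [ratio, abs_div, abs_of_pos hp, div_le_one hp]
    exact (abs_coord_succ_le_rad p i).trans hr
  | algebraMap r => exact ⟨|r|, fun _ _ _ => le_rfl⟩
  | add a b _ _ iha ihb =>
    obtain ⟨A, hA⟩ := iha
    obtain ⟨B, hB⟩ := ihb
    exact ⟨A + B, fun p hp hr =>
      (abs_add_le _ _).trans (add_le_add (hA p hp hr) (hB p hp hr))⟩
  | mul a b _ _ iha ihb =>
    obtain ⟨A, hA⟩ := iha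
    obtain ⟨B, hB⟩ := ihb
    refine ⟨A * B, fun p hp hr => ?_⟩
    rw [Pi.mul_apply, abs_mul]
    exact mul_le_mul (hA p hp hr) (hB p hp hr) (abs_nonneg _)
      ((abs_nonneg _).trans (hA p hp hr))

end RatioAlgebra

section LowerOrder

variable {ι : Type*} (D : ι → (Spacetime n → ℝ) → Spacetime n → ℝ)

def lowerOrder (m : ℕ) : Submodule (ratioAlgebra n) ((Spacetime n → ℝ) → Spacetime n → ℝ) :=
  Submodule.span _ {R | ∃ J : List (Fin n), J.length < m ∧ ∃ γ, R = fun u => D γ (HI J u)}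

def lowerOrderSum [Fintype ι] (m : ℕ) (u : Spacetime n → ℝ) (p : Spacetime n) : ℝ :=
  ∑ k ∈ Finset.range m, ∑ J : Fin k → Fin n, ∑ γ, |D γ (HI (List.ofFn J) u) p|

variable {D}

lemma lowerOrder_mono {m m' : ℕ} (h : m ≤ m') : lowerOrder D m ≤ lowerOrder D m' :=
  Submodule.span_mono fun _ ⟨J, hJ, γ, hR⟩ => ⟨J, hJ.trans_le h, γ, hR⟩

lemma mem_lowerOrder_of_length_lt {m : ℕ} {J : List (Fin n)} (hJ : J.length < m) (γ : ι) :
    (fun u => D γ (HI J u)) ∈ lowerOrder D m :=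
  Submodule.subset_span ⟨J, hJ, γ, rfl⟩

lemma comp_HI_mem_lowerOrder {m : ℕ} {R : (Spacetime n → ℝ) → Spacetime n → ℝ}
    (hR : R ∈ lowerOrder D m) (J : List (Fin n)) :
    (fun u => R (HI J u)) ∈ lowerOrder D (m + J.length) := by
  have hmap : (lowerOrder D m).map (LinearMap.funLeft (ratioAlgebra n) _ (HI J))
      ≤ lowerOrder D (m + J.length) := by
    rw [lowerOrder, Submodule.map_span, Submodule.span_le]
    rintro _ ⟨_, ⟨K, hK, γ, rfl⟩, rfl⟩
    have h := mem_lowerOrder_of_length_lt (D := D) (J := K ++ J) (m := m + J.length)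
      (by simp; omega) γ
    simp only [HI_append] at h
    exact h
  exact hmap (Submodule.mem_map_of_mem hR)

variable [Fintype ι]

lemma lowerOrderSum_nonneg (m : ℕ) (u : Spacetime n → ℝ) (p : Spacetime n) :
    0 ≤ lowerOrderSum D m u p := by
  unfold lowerOrderSum
  positivity

lemma abs_le_lowerOrderSum {m : ℕ} {J : List (Fin n)} (hJ : J.length < m) (γ : ι)
    (u : Spacetime n → ℝ) (p : Spacetime n) : |D γ (HI J u) p| ≤ lowerOrderSum D m u p := by
  have hγ : |D γ (HI J u) p| ≤ ∑ γ, |D γ (HI (List.ofFn J.get) u) p| := by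
    rw [List.ofFn_get]
    exact Finset.single_le_sum (fun γ _ => abs_nonneg (D γ (HI J u) p)) (Finset.mem_univ γ)
  refine hγ.trans <| (Finset.single_le_sum
    (f := fun K : Fin J.length → Fin n => ∑ γ, |D γ (HI (List.ofFn K) u) p|)
    (fun K _ => ?_) (Finset.mem_univ J.get)).trans <| Finset.single_le_sum
    (f := fun k => ∑ K : Fin k → Fin n, ∑ γ, |D γ (HI (List.ofFn K) u) p|)
    (fun k _ => ?_) (Finset.mem_range.mpr hJ)
  all_goals positivity

lemma exists_bound_of_mem_lowerOrder {m : ℕ} {R : (Spacetime n → ℝ) → Spacetime n → ℝ}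
    (hR : R ∈ lowerOrder D m) : ∃ C, ∀ (u : Spacetime n → ℝ) (p : Spacetime n),
      0 < p 0 → rad p ≤ p 0 → |R u p| ≤ C * lowerOrderSum D m u p := by
  induction hR using Submodule.span_induction with
  | mem _ h =>
    obtain ⟨J, hJ, γ, rfl⟩ := h
    exact ⟨1, fun u p _ _ => by rw [one_mul]; exact abs_le_lowerOrderSum hJ γ u p⟩
  | zero => exact ⟨0, fun u p _ _ => by simp⟩
  | add R R' _ _ ih ih' =>
    obtain ⟨C, hC⟩ := ih
    obtain ⟨C', hC'⟩ := ih'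
    refine ⟨C + C', fun u p hp hr => ?_⟩
    rw [add_mul]
    exact (abs_add_le _ _).trans (add_le_add (hC u p hp hr) (hC' u p hp hr))
  | smul a R _ ih =>
    obtain ⟨B, hB⟩ := exists_bound_of_mem_ratioAlgebra a.2
    obtain ⟨C, hC⟩ := ih
    refine ⟨B * C, fun u p hp hr => ?_⟩
    rw [Pi.smul_apply, Subalgebra.smul_def, smul_eq_mul, Pi.mul_apply, abs_mul, mul_assoc]
    exact mul_le_mul (hB p hp hr) (hC u p hp hr) (abs_nonneg _)
      ((abs_nonneg _).trans (hB p hp hr))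

end LowerOrder

section BoostCommutator

variable {ι : Type*}

structure HasBoostCommutator (D : ι → (Spacetime n → ℝ) → Spacetime n → ℝ)
    (Ω : Set (Spacetime n)) : Prop where
  isOpen : IsOpen Ω
  time_ne_zero : ∀ p ∈ Ω, p 0 ≠ 0
  contDiffOn : ∀ ⦃U : Set (Spacetime n)⦄, IsOpen U → ∀ ⦃u : Spacetime n → ℝ⦄,
    ContDiffOn ℝ ∞ u U → ∀ β, ContDiffOn ℝ ∞ (D β u) (U ∩ Ω)
  commutator : ∀ j β, ∃ R ∈ lowerOrder D 1, ∀ ⦃U : Set (Spacetime n)⦄, IsOpen U →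
    ∀ ⦃u : Spacetime n → ℝ⦄, ContDiffOn ℝ ∞ u U → ∀ p ∈ U ∩ Ω,
      Lb j (D β u) p = D β (Lb j u) p + R u p

namespace HasBoostCommutator

variable {D : ι → (Spacetime n → ℝ) → Spacetime n → ℝ} {Ω : Set (Spacetime n)}

lemma contDiffOn_of_mem_lowerOrder (hD : HasBoostCommutator D Ω) {m : ℕ}
    {R : (Spacetime n → ℝ) → Spacetime n → ℝ} (hR : R ∈ lowerOrder D m) {U : Set (Spacetime n)}
    (hU : IsOpen U) {u : Spacetime n → ℝ} (hu : ContDiffOn ℝ ∞ u U) :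
    ContDiffOn ℝ ∞ (R u) (U ∩ Ω) := by
  induction hR using Submodule.span_induction with
  | mem _ h =>
    obtain ⟨J, -, γ, rfl⟩ := h
    exact hD.contDiffOn hU (contDiffOn_HI hU hu J) γ
  | zero => exact contDiffOn_const
  | add _ _ _ _ ih ih' => exact ih.add ih'
  | smul a _ _ ih =>
    exact ((contDiffOn_of_mem_ratioAlgebra a.2).mono fun p hp => hD.time_ne_zero p hp.2).mul
      ih

lemma differentiableAt_of_mem_lowerOrder (hD : HasBoostCommutator D Ω) {m : ℕ}
    {R : (Spacetime n → ℝ) → Spacetime n → ℝ} (hR : R ∈ lowerOrder D m) {U : Set (Spacetime n)}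
    (hU : IsOpen U) {u : Spacetime n → ℝ} (hu : ContDiffOn ℝ ∞ u U) {p : Spacetime n}
    (hp : p ∈ U ∩ Ω) : DifferentiableAt ℝ (R u) p :=
  ((hD.contDiffOn_of_mem_lowerOrder hR hU hu).differentiableOn (by simp)).differentiableAt
    ((hU.inter hD.isOpen).mem_nhds hp)

lemma exists_Lb_eqOn_of_mem_lowerOrder (hD : HasBoostCommutator D Ω) {m : ℕ}
    {R : (Spacetime n → ℝ) → Spacetime n → ℝ} (hR : R ∈ lowerOrder D m) (j : Fin n) :
    ∃ R' ∈ lowerOrder D (m + 1), ∀ ⦃U : Set (Spacetime n)⦄, IsOpen U →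
      ∀ ⦃u : Spacetime n → ℝ⦄, ContDiffOn ℝ ∞ u U → ∀ p ∈ U ∩ Ω, Lb j (R u) p = R' u p := by
  induction hR using Submodule.span_induction with
  | mem _ h =>
    obtain ⟨J, hJ, γ, rfl⟩ := h
    obtain ⟨R₁, hR₁, hcomm⟩ := hD.commutator j γ
    refine ⟨(fun u => D γ (HI (j :: J) u)) + fun u => R₁ (HI J u),
      add_mem (mem_lowerOrder_of_length_lt (by simpa using hJ) γ)
        (lowerOrder_mono (by omega) (comp_HI_mem_lowerOrder hR₁ J)),
      fun U hU u hu p hp => hcomm hU (contDiffOn_HI hU hu J) p hp⟩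
  | zero => exact ⟨0, zero_mem _, fun _ _ _ _ p _ => Lb_const 0 j p⟩
  | add R R' hR hR' ih ih' =>
    obtain ⟨S, hS, hLS⟩ := ih
    obtain ⟨S', hS', hLS'⟩ := ih'
    refine ⟨S + S', add_mem hS hS', fun U hU u hu p hp => ?_⟩
    show Lb j (R u + R' u) p = S u p + S' u p
    rw [← hLS hU hu p hp, ← hLS' hU hu p hp]
    exact Lb_add (hD.differentiableAt_of_mem_lowerOrder hR hU hu hp)
      (hD.differentiableAt_of_mem_lowerOrder hR' hU hu hp) j
  | smul a R hR ih =>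
    obtain ⟨S, hS, hLS⟩ := ih
    obtain ⟨b, hb, hLa⟩ := exists_Lb_eqOn_of_mem_ratioAlgebra a.2 j
    refine ⟨(⟨b, hb⟩ : ratioAlgebra n) • R + a • S,
      add_mem (Submodule.smul_mem _ _ (lowerOrder_mono (by omega) hR))
        (Submodule.smul_mem _ _ hS),
      fun U hU u hu p hp => ?_⟩
    simp only [Pi.add_apply, Pi.smul_apply, Subalgebra.smul_def, smul_eq_mul, Pi.mul_apply]
    rw [← hLa p (hD.time_ne_zero p hp.2), ← hLS hU hu p hp]
    exact Lb_mul (differentiableAt_of_mem_ratioAlgebra a.2 (hD.time_ne_zero p hp.2))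
      (hD.differentiableAt_of_mem_lowerOrder hR hU hu hp) j

lemma exists_HI_eq_add_lowerOrder (hD : HasBoostCommutator D Ω) (I : List (Fin n)) (β : ι) :
    ∃ R ∈ lowerOrder D I.length, ∀ ⦃U : Set (Spacetime n)⦄, IsOpen U →
      ∀ ⦃u : Spacetime n → ℝ⦄, ContDiffOn ℝ ∞ u U → ∀ p ∈ U ∩ Ω,
        HI I (D β u) p = D β (HI I u) p + R u p := by
  induction I with
  | nil => exact ⟨0, zero_mem _, fun _ _ _ _ p _ => (add_zero _).symm⟩
  | cons j I ih =>
    obtain ⟨R, hR, hHI⟩ := ih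
    obtain ⟨R₁, hR₁, hcomm⟩ := hD.commutator j β
    obtain ⟨R₂, hR₂, hLR⟩ := hD.exists_Lb_eqOn_of_mem_lowerOrder hR j
    refine ⟨(fun u => R₁ (HI I u)) + R₂,
      add_mem (lowerOrder_mono (by simp; omega) (comp_HI_mem_lowerOrder hR₁ I)) hR₂,
      fun U hU u hu p hp => ?_⟩
    have hloc : HI I (D β u) =ᶠ[𝓝 p] fun q => D β (HI I u) q + R u q :=
      Filter.eventually_of_mem ((hU.inter hD.isOpen).mem_nhds hp) fun q hq => hHI hU hu q hq
    have hHIu := contDiffOn_HI hU hu I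
    calc HI (j :: I) (D β u) p = Lb j (fun q => D β (HI I u) q + R u q) p := Lb_congr hloc j
      _ = Lb j (D β (HI I u)) p + Lb j (R u) p :=
        Lb_add (((hD.contDiffOn hU hHIu β).differentiableOn (by simp)).differentiableAt
          ((hU.inter hD.isOpen).mem_nhds hp))
          (hD.differentiableAt_of_mem_lowerOrder hR hU hu hp) j
      _ = _ := by
        rw [hcomm hU hHIu p hp, hLR hU hu p hp, add_assoc]
        rfl

lemma commutator_estimate [Fintype ι] (hD : HasBoostCommutator D Ω) (m : ℕ) :
    ∃ C, 0 ≤ C ∧ ∀ ⦃U : Set (Spacetime n)⦄, IsOpen U → ∀ ⦃u : Spacetime n → ℝ⦄,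
      ContDiffOn ℝ ∞ u U → ∀ p ∈ U ∩ Ω, 0 < p 0 → rad p ≤ p 0 →
        ∀ (I : Fin m → Fin n) (β : ι), |HI (List.ofFn I) (D β u) p|
          ≤ |D β (HI (List.ofFn I) u) p| + C * lowerOrderSum D m u p := by
  choose R hR hHI using fun x : (Fin m → Fin n) × ι => hD.exists_HI_eq_add_lowerOrder
    (List.ofFn x.1) x.2
  choose c hc using fun x => exists_bound_of_mem_lowerOrder (by simpa using hR x)
  obtain ⟨C, hC⟩ := Finite.exists_le c
  refine ⟨max C 0, le_max_right _ _, fun U hU u hu p hp hp0 hr I β => ?_⟩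
  rw [hHI (I, β) hU hu p hp]
  refine (abs_add_le _ _).trans (add_le_add le_rfl ((hc (I, β) u p hp0 hr).trans ?_))
  exact mul_le_mul_of_nonneg_right ((hC _).trans (le_max_left _ _)) (lowerOrderSum_nonneg _ _ _)

end HasBoostCommutator

end BoostCommutator

section HyperboloidalDerivatives

variable {u : Spacetime n → ℝ} {p : Spacetime n} {U : Set (Spacetime n)}

lemma rad_sq (p : Spacetime n) : rad p ^ 2 = ∑ k : Fin n, p k.succ ^ 2 :=
  Real.sq_sqrt (Finset.sum_nonneg fun k _ => sq_nonneg (p k.succ))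

lemma continuous_rad : Continuous (rad (n := n)) :=
  (continuous_finsetSum _ fun k _ => (continuous_apply k.succ).pow 2).sqrt

lemma time_pos_of_rad_lt (hp : rad p < p 0) : 0 < p 0 :=
  (Real.sqrt_nonneg _).trans_lt hp

lemma minkowski_pos_of_rad_lt (hp : rad p < p 0) : 0 < p 0 ^ 2 - ∑ k : Fin n, p k.succ ^ 2 := by
  have hr : 0 ≤ rad p := Real.sqrt_nonneg _
  rw [← rad_sq]
  nlinarith

lemma Lb_minkowski (j : Fin n) (p : Spacetime n) :
    Lb j (fun q => q 0 ^ 2 - ∑ k : Fin n, q k.succ ^ 2) p = 0 := by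
  have hd : ∀ β, DifferentiableAt ℝ (fun q : Spacetime n => q β ^ 2) p :=
    fun β => (differentiableAt_apply β p).pow 2
  rw [Lb_eq_fderiv, fderiv_fun_sub (hd 0) (DifferentiableAt.fun_sum fun k _ => hd k.succ),
    fderiv_fun_sum fun k _ => hd k.succ]
  simp [fderiv_fun_pow, differentiableAt_apply, fderiv_apply, boostField, Pi.single_apply]
  ring

def weight (p : Spacetime n) : ℝ := Real.sqrt (p 0 ^ 2 - rad p ^ 2) / p 0

lemma weight_eq :
    weight (n := n) = fun q => Real.sqrt (q 0 ^ 2 - ∑ k : Fin n, q k.succ ^ 2) / q 0 :=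
  funext fun q => by rw [weight, rad_sq]

lemma contDiffOn_weight : ContDiffOn ℝ ∞ (weight (n := n)) {p | rad p < p 0} := by
  rw [weight_eq]
  refine ContDiffOn.div ?_ (contDiffOn_apply ℝ ℝ 0 _) fun p hp => (time_pos_of_rad_lt hp).ne'
  refine ContDiffOn.sqrt ?_ fun p hp => (minkowski_pos_of_rad_lt hp).ne'
  exact ((contDiffOn_apply ℝ ℝ 0 _).pow 2).sub
    (ContDiffOn.sum fun k _ => (contDiffOn_apply ℝ ℝ k.succ _).pow 2)

/-- `T` is boost invariant, so only the factor `1/t` of `T/t` contributes. -/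
lemma Lb_weight (hp : rad p < p 0) (j : Fin n) : Lb j weight p = -ratio j p * weight p := by
  have hp0 := (time_pos_of_rad_lt hp).ne'
  have hQ : DifferentiableAt ℝ (fun q : Spacetime n => q 0 ^ 2 - ∑ k : Fin n, q k.succ ^ 2) p :=
    ((differentiableAt_apply 0 p).pow 2).sub
      (DifferentiableAt.fun_sum fun k _ => (differentiableAt_apply k.succ p).pow 2)
  have hT := Lb_comp (Real.hasDerivAt_sqrt (minkowski_pos_of_rad_lt hp).ne') hQ j
  rw [Lb_minkowski, mul_zero] at hT
  have hinv : DifferentiableAt ℝ (fun q : Spacetime n => (q 0)⁻¹) p :=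
    (differentiableAt_apply 0 p).inv hp0
  rw [weight_eq]
  simp only [div_eq_mul_inv]
  rw [Lb_mul (hQ.sqrt (minkowski_pos_of_rad_lt hp).ne') hinv, hT, Lb_inv_coord_zero hp0, ratio]
  field_simp
  ring

lemma Lb_db (hU : IsOpen U) (hu : ContDiffOn ℝ ∞ u U) (hpU : p ∈ U) (hp0 : p 0 ≠ 0)
    (i j : Fin n) : Lb j (db i u) p = db i (Lb j u) p - ratio i p * db j u p := by
  have hd : ∀ β, DifferentiableAt ℝ (pd β u) p := fun β =>
    ((contDiffOn_pd hU hu β).differentiableOn (by simp)).differentiableAt (hU.mem_nhds hpU)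
  have hratio := differentiableAt_of_mem_ratioAlgebra (ratio_mem_ratioAlgebra i) hp0
  change Lb j (fun q => pd i.succ u q + ratio i q * pd 0 u q) p = _
  rw [Lb_add (v := fun q => ratio i q * pd 0 u q) (hd _) (hratio.mul (hd 0)),
    Lb_mul hratio (hd 0), Lb_ratio hp0, Lb_pd hU hu hpU, Lb_pd hU hu hpU, fderiv_boostField,
    fderiv_boostField]
  by_cases h : i = j
  · subst h; simp [db, ratio]; ring
  · simp [db, ratio, h, Ne.symm h]; ring

lemma Lb_Td (hU : IsOpen U) (hu : ContDiffOn ℝ ∞ u U) (hpU : p ∈ U) (hp : rad p < p 0)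
    (j : Fin n) (α : Fin (n + 1)) :
    Lb j (Td α u) p = Td α (Lb j u) p - ratio j p * Td α u p
      - ((Pi.single α 1 : Spacetime n) 0 * Td j.succ u p
        + (Pi.single α 1 : Spacetime n) j.succ * Td 0 u p) := by
  have hd : DifferentiableAt ℝ (pd α u) p :=
    ((contDiffOn_pd hU hu α).differentiableOn (by simp)).differentiableAt (hU.mem_nhds hpU)
  have hw : DifferentiableAt ℝ weight p :=
    (contDiffOn_weight.differentiableOn (by simp)).differentiableAt
      ((isOpen_lt continuous_rad (continuous_apply 0)).mem_nhds hp)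
  change Lb j (fun q => weight q * pd α u q) p = _
  rw [Lb_mul hw hd, Lb_weight hp, Lb_pd hU hu hpU, fderiv_boostField]
  simp only [Td, ← weight.eq_def]
  ring

lemma hasBoostCommutator_db : HasBoostCommutator (db (n := n)) {p | p 0 ≠ 0} where
  isOpen := isOpen_time_ne_zero
  time_ne_zero _ hp := hp
  contDiffOn _ hU _ hu i :=
    ((contDiffOn_pd hU hu i.succ).mono Set.inter_subset_left).add
      (((contDiffOn_ratio i).mono Set.inter_subset_right).mul
        ((contDiffOn_pd hU hu 0).mono Set.inter_subset_left))
  commutator j i :=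
    ⟨-(⟨ratio i, ratio_mem_ratioAlgebra i⟩ : ratioAlgebra n) • fun u => db j (HI [] u),
      Submodule.smul_mem _ _ (mem_lowerOrder_of_length_lt zero_lt_one j),
      fun _ hU _ hu p hp => by
        rw [Lb_db hU hu hp.1 hp.2]
        simp [Subalgebra.smul_def, sub_eq_add_neg, HI]⟩

lemma hasBoostCommutator_Td : HasBoostCommutator (Td (n := n)) {p | rad p < p 0} where
  isOpen := isOpen_lt continuous_rad (continuous_apply 0)
  time_ne_zero _ hp := (time_pos_of_rad_lt hp).ne'
  contDiffOn _ hU _ hu α :=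
    (contDiffOn_weight.mono Set.inter_subset_right).mul
      ((contDiffOn_pd hU hu α).mono Set.inter_subset_left)
  commutator j α := by
    have hT : ∀ β, (fun u => Td β (HI [] u)) ∈ lowerOrder (Td (n := n)) 1 :=
      mem_lowerOrder_of_length_lt zero_lt_one
    refine ⟨-(⟨ratio j, ratio_mem_ratioAlgebra j⟩ : ratioAlgebra n) • (fun u => Td α (HI [] u))
      - ((Pi.single α 1 : Spacetime n) 0 • (fun u => Td j.succ (HI [] u))
        + (Pi.single α 1 : Spacetime n) j.succ • fun u => Td 0 (HI [] u)),
      sub_mem (Submodule.smul_mem _ _ (hT α)) (add_mem (Submodule.smul_of_tower_mem _ _ (hT _))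
        (Submodule.smul_of_tower_mem _ _ (hT 0))), fun _ hU _ hu p hp => ?_⟩
    rw [Lb_Td hU hu hp.1 hp.2]
    simp [Subalgebra.smul_def, sub_eq_add_neg, HI]
    ring

end HyperboloidalDerivatives

theorem boost_db_Td_commutator_estimates_general (n plen : ℕ) :
    ∃ C > (0 : ℝ),
      ∀ U : Set (Fin (n + 1) → ℝ), IsOpen U →
      ∀ u : (Fin (n + 1) → ℝ) → ℝ, ContDiffOn ℝ (⊤ : ℕ∞) u U →
        (∀ p ∈ U, 0 < p 0 → rad p ≤ p 0 →
          ∑ i : Fin n, ∑ I : Fin plen → Fin n, |HI (List.ofFn I) (db i u) p|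
            ≤ ∑ i : Fin n, ∑ I : Fin plen → Fin n, |db i (HI (List.ofFn I) u) p|
              + C * ∑ k ∈ Finset.range plen, ∑ J : Fin k → Fin n, ∑ j : Fin n,
                  |db j (HI (List.ofFn J) u) p|)
        ∧ (∀ p ∈ U, rad p < p 0 → ∀ I : Fin plen → Fin n, ∀ α : Fin (n + 1),
            |HI (List.ofFn I) (Td α u) p|
              ≤ |Td α (HI (List.ofFn I) u) p|
                + C * ∑ k ∈ Finset.range plen, ∑ J : Fin k → Fin n,
                    ∑ β : Fin (n + 1), |Td β (HI (List.ofFn J) u) p|) := by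
  obtain ⟨Ca, hCa, hdb⟩ := hasBoostCommutator_db.commutator_estimate (n := n) plen
  obtain ⟨Cb, hCb, hTd⟩ := hasBoostCommutator_Td.commutator_estimate (n := n) plen
  set N : ℝ := Fintype.card (Fin n) * Fintype.card (Fin plen → Fin n)
  have hN : 0 ≤ N := by positivity
  have hNCa : 0 ≤ N * Ca := mul_nonneg hN hCa
  refine ⟨N * Ca + Cb + 1, by linarith,
    fun U hU u hu => ⟨fun p hpU hp0 hr => ?_, fun p hpU hp I α => ?_⟩⟩
  · have hS := lowerOrderSum_nonneg (D := db) plen u p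
    calc _ ≤ ∑ i : Fin n, ∑ I : Fin plen → Fin n,
          (|db i (HI (List.ofFn I) u) p| + Ca * lowerOrderSum db plen u p) :=
          Finset.sum_le_sum fun i _ => Finset.sum_le_sum fun I _ =>
            hdb hU hu p ⟨hpU, hp0.ne'⟩ hp0 hr I i
      _ = ∑ i : Fin n, ∑ I : Fin plen → Fin n, |db i (HI (List.ofFn I) u) p|
          + N * Ca * lowerOrderSum db plen u p := by
          simp only [Finset.sum_add_distrib, Finset.sum_const, Finset.card_univ, nsmul_eq_mul, N]
          ring
      _ ≤ _ := add_le_add le_rfl (mul_le_mul_of_nonneg_right (by linarith) hS)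
  · have hS := lowerOrderSum_nonneg (D := Td) plen u p
    exact (hTd hU hu p ⟨hpU, hp⟩ (time_pos_of_rad_lt hp) hp.le I α).trans
      (add_le_add le_rfl (mul_le_mul_of_nonneg_right (by linarith) hS))

/-- commutator estimates between iterated boosts and the operators
`∂̄_i` (inside the cone `{0 < t, |x| ≤ t}`) and `(T/t)∂_α` (inside `{|x| < t}`). -/
theorem boost_db_Td_commutator_estimates (n plen : ℕ) (hn : 1 ≤ n) (hp : 1 ≤ plen) :
    ∃ C > (0 : ℝ),
      ∀ U : Set (Fin (n + 1) → ℝ), IsOpen U →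
      ∀ u : (Fin (n + 1) → ℝ) → ℝ, ContDiffOn ℝ (⊤ : ℕ∞) u U →
        (∀ p ∈ U, 0 < p 0 → rad p ≤ p 0 →
          ∑ i : Fin n, ∑ I : Fin plen → Fin n, |HI (List.ofFn I) (db i u) p|
            ≤ ∑ i : Fin n, ∑ I : Fin plen → Fin n, |db i (HI (List.ofFn I) u) p|
              + C * ∑ k ∈ Finset.range plen, ∑ J : Fin k → Fin n, ∑ j : Fin n,
                  |db j (HI (List.ofFn J) u) p|)
        ∧ (∀ p ∈ U, rad p < p 0 → ∀ I : Fin plen → Fin n, ∀ α : Fin (n + 1),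
            |HI (List.ofFn I) (Td α u) p|
              ≤ |Td α (HI (List.ofFn I) u) p|
                + C * ∑ k ∈ Finset.range plen, ∑ J : Fin k → Fin n,
                    ∑ β : Fin (n + 1), |Td β (HI (List.ofFn J) u) p|) :=
  boost_db_Td_commutator_estimates_general n plen
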